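/- arXiv:1803.03122 — 4 statements merged into one kernel-verified Lean document; each statement's English description precedes it below -/
import Mathlib

section
/- For p ≥ 0, Re(c) > Re(b) > 0, Re(α) > 0, and |z| < 1, the first derivative of the ML-generalized Gauss hypergeometric function satisfies d/dz [F_p^{ML}(a,b;c;z)] = (ab/c) · F_p^{ML}(a+1, b+1; c+1; z). -/
open Complex MeasureTheory intervalIntegral
open scoped Real Nat

/-- Three-parameter Mittag-Leffler function `E_{α,β}^γ(z)`. -/
noncomputable def mlE (α β γ z : ℂ) : ℂ :=
  ∑' n : ℕ, (ascPochhammer ℂ n).eval γ / Complex.Gamma (α * n + β) * z ^ n / (n ! : ℂ)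

/-- ML-generalized beta function `B_p^{ML}(x,y)` (with parameters α β γ). -/
noncomputable def mlBeta (α β γ p x y : ℂ) : ℂ :=
  ∫ t in (0:ℝ)..1, (t : ℂ) ^ (x - 1) * ((1 : ℂ) - t) ^ (y - 1) *
    mlE α β γ (-p / (t * (1 - t)))

/-- ML-generalized Gauss hypergeometric function, defined by its series. -/
noncomputable def mlF (α β γ : ℂ) (p : ℝ) (a b c z : ℂ) : ℂ :=
  ∑' n : ℕ, (ascPochhammer ℂ n).eval a *
    (mlBeta α β γ p (b + n) (c - b) / Complex.betaIntegral b (c - b)) * z ^ n / (n ! : ℂ)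

lemma poch_norm_le (a : ℂ) (n : ℕ) :
    ‖(ascPochhammer ℂ n).eval a‖ ≤ ∏ i ∈ Finset.range n, (‖a‖ + i) := by
  induction n with
  | zero => simp
  | succ n ih =>
    rw [ascPochhammer_succ_eval, Finset.prod_range_succ]
    refine (norm_mul_le _ _).trans ?_
    have h1 : ‖a + (n : ℂ)‖ ≤ ‖a‖ + n := by
      refine (norm_add_le _ _).trans ?_
      simp
    exact mul_le_mul ih h1 (norm_nonneg _) (Finset.prod_nonneg fun i _ => by positivity)

open scoped Classical in
lemma mlBeta_bound (α β γ p b c : ℂ) :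
    ∃ M : ℝ, 0 ≤ M ∧ ∀ n : ℕ, ‖mlBeta α β γ p (b + n) (c - b)‖ ≤ M := by
  set g : ℕ → ℝ → ℂ := fun n t => (t : ℂ) ^ (b + n - 1) * ((1 : ℂ) - t) ^ (c - b - 1) *
    mlE α β γ (-p / (t * (1 - t))) with hg
  have hmb : ∀ n : ℕ, mlBeta α β γ p (b + n) (c - b) = ∫ t in (0:ℝ)..1, g n t := fun n => rfl
  by_cases h : ∃ n, IntervalIntegrable (g n) volume 0 1
  · set n0 := Nat.find h with hn0
    have hMnn : (0:ℝ) ≤ ∫ t in (0:ℝ)..1, ‖g n0 t‖ :=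
      intervalIntegral.integral_nonneg zero_le_one (fun t _ => norm_nonneg (g n0 t))
    refine ⟨∫ t in (0:ℝ)..1, ‖g n0 t‖, hMnn, fun n => ?_⟩
    rcases lt_or_ge n n0 with hn | hn
    · rw [hmb, intervalIntegral.integral_undef (Nat.find_min h hn)]
      simpa using hMnn
    · rw [hmb]
      have hb : ∀ᵐ t ∂(volume.restrict (Set.uIoc (0:ℝ) 1)), ‖g n t‖ ≤ ‖g n0 t‖ := by
        filter_upwards [ae_restrict_mem measurableSet_uIoc] with t ht
        rw [Set.uIoc_of_le zero_le_one] at ht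
        have ht0 : 0 < t := ht.1
        have ht1 : t ≤ 1 := ht.2
        simp only [hg, mul_assoc, norm_mul]
        refine mul_le_mul_of_nonneg_right ?_ (by positivity)
        rw [Complex.norm_cpow_eq_rpow_re_of_pos ht0, Complex.norm_cpow_eq_rpow_re_of_pos ht0]
        apply Real.rpow_le_rpow_of_exponent_ge ht0 ht1
        simp only [Complex.sub_re, Complex.add_re, Complex.natCast_re, Complex.one_re]
        have : (n0 : ℝ) ≤ n := Nat.cast_le.mpr hn
        linarith
      have := intervalIntegral.norm_integral_le_abs_of_norm_le hb (Nat.find_spec h).norm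
      rwa [_root_.abs_of_nonneg hMnn] at this
  · push_neg at h
    refine ⟨0, le_refl _, fun n => ?_⟩
    rw [hmb, intervalIntegral.integral_undef (h n)]
    simp

lemma poch_succ_eval_left (a : ℂ) (n : ℕ) :
    (ascPochhammer ℂ (n + 1)).eval a = a * (ascPochhammer ℂ n).eval (a + 1) := by
  rw [ascPochhammer_succ_left]
  simp [Polynomial.eval_comp]

set_option maxHeartbeats 2000000 in
/-- Differentiation formula for the ML-generalized Gauss hypergeometric function. -/
theorem mlF_deriv (α β γ : ℂ) (p : ℝ) (a b c z : ℂ)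
    (hp : 0 ≤ p) (hb : 0 < b.re) (hbc : b.re < c.re) (hα : 0 < α.re)
    (hz : ‖z‖ < 1) :
    deriv (fun w => mlF α β γ p a b c w) z =
      a * b / c * mlF α β γ p (a + 1) (b + 1) (c + 1) z := by
  have hc : 0 < c.re := hb.trans hbc
  have hcb : 0 < (c - b).re := by simp only [Complex.sub_re]; linarith
  have hbne : b ≠ 0 := fun h => by simp [h] at hb
  have hcne : c ≠ 0 := fun h => by simp [h] at hc
  have hb1 : 0 < (b + 1).re := by simp only [Complex.add_re, Complex.one_re]; linarith
  -- beta values nonzero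
  have hbeta_ne : ∀ u v : ℂ, 0 < u.re → 0 < v.re → Complex.betaIntegral u v ≠ 0 := by
    intro u v hu hv h0
    have h1 := Complex.Gamma_mul_Gamma_eq_betaIntegral hu hv
    rw [h0, mul_zero] at h1
    exact mul_ne_zero (Complex.Gamma_ne_zero_of_re_pos hu)
      (Complex.Gamma_ne_zero_of_re_pos hv) h1
  have hB0 : Complex.betaIntegral b (c - b) ≠ 0 := hbeta_ne _ _ hb hcb
  have hB1 : Complex.betaIntegral (b + 1) (c - b) ≠ 0 := hbeta_ne _ _ hb1 hcb
  -- the beta recurrence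
  have hid : b * Complex.betaIntegral b (c - b) = c * Complex.betaIntegral (b + 1) (c - b) := by
    have e1 := Complex.Gamma_mul_Gamma_eq_betaIntegral hb hcb
    have e2 := Complex.Gamma_mul_Gamma_eq_betaIntegral hb1 hcb
    rw [show b + (c - b) = c by ring] at e1
    rw [show b + 1 + (c - b) = c + 1 by ring, Complex.Gamma_add_one b hbne,
      Complex.Gamma_add_one c hcne] at e2
    have hgc : Complex.Gamma c ≠ 0 := Complex.Gamma_ne_zero_of_re_pos hc
    apply mul_left_cancel₀ hgc
    linear_combination e2 - b * e1
  obtain ⟨M, hM0, hM⟩ := mlBeta_bound α β γ p b c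
  set Bet := Complex.betaIntegral b (c - b) with hBet
  set A : ℕ → ℂ := fun n => (ascPochhammer ℂ n).eval a *
    (mlBeta α β γ p (b + n) (c - b) / Bet) / (n ! : ℂ) with hA
  have hF : (fun w => mlF α β γ p a b c w) = fun w => ∑' n : ℕ, A n * w ^ n := by
    funext w
    exact tsum_congr fun n => by rw [hA]; ring
  -- radius set-up
  set r : ℝ := (‖z‖ + 1) / 2 with hr
  have habs : (0:ℝ) ≤ ‖z‖ := norm_nonneg z
  have hr0 : 0 < r := by rw [hr]; linarith
  have hzr : ‖z‖ < r := by rw [hr]; linarith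
  have hr1 : r < 1 := by rw [hr]; linarith
  set K : ℝ := M / ‖Bet‖ with hK
  have hK0 : 0 ≤ K := div_nonneg hM0 (norm_nonneg _)
  have hAle : ∀ n : ℕ, ‖A n‖ ≤ (∏ i ∈ Finset.range n, (‖a‖ + i)) * K / (n !) := by
    intro n
    rw [hA]
    simp only [norm_div, norm_mul]
    rw [Complex.norm_natCast]
    have hBpos : 0 < ‖Bet‖ := norm_pos_iff.mpr hB0
    apply div_le_div_of_nonneg_right ?_ (by positivity)
    refine mul_le_mul (poch_norm_le a n) ?_ (by positivity) ?_
    · rw [hK]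
      exact div_le_div_of_nonneg_right (hM n) hBpos.le
    · exact Finset.prod_nonneg fun i _ => by positivity
  -- the majorant series
  set u : ℕ → ℝ := fun n =>
    (∏ i ∈ Finset.range n, (‖a‖ + i)) * K * n * r ^ (n - 1) / (n !) with hu
  have hu0 : ∀ n, 0 ≤ u n := by
    intro n
    rw [hu]
    have : (0:ℝ) ≤ ∏ i ∈ Finset.range n, (‖a‖ + i) :=
      Finset.prod_nonneg fun i _ => by positivity
    positivity
  have husum : Summable u := by
    set l : ℝ := (1 + r) / 2 with hl
    have hrl : r < l := by rw [hl]; linarith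
    have hl1 : l < 1 := by rw [hl]; linarith
    apply summable_of_ratio_norm_eventually_le hl1
    have hev : ∀ᶠ n : ℕ in Filter.atTop, ‖a‖ * r ≤ n * (l - r) ∧ 1 ≤ n := by
      rw [Filter.eventually_atTop]
      obtain ⟨N, hN⟩ := exists_nat_ge (max (‖a‖ * r / (l - r)) 1)
      refine ⟨N, fun n hn => ?_⟩
      have h1 : (‖a‖ * r / (l - r)) ≤ n := le_trans (le_trans (le_max_left _ _) hN) (Nat.cast_le.mpr hn)
      have h2 : (1:ℝ) ≤ n := le_trans (le_trans (le_max_right _ _) hN) (Nat.cast_le.mpr hn)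
      constructor
      · rw [div_le_iff₀ (by linarith : (0:ℝ) < l - r)] at h1
        linarith [h1]
      · exact_mod_cast h2
    filter_upwards [hev] with n hn
    obtain ⟨hn1, hn2⟩ := hn
    have hprodnn : (0:ℝ) ≤ ∏ i ∈ Finset.range n, (‖a‖ + i) :=
      Finset.prod_nonneg fun i _ => by positivity
    rw [Real.norm_eq_abs, Real.norm_eq_abs, _root_.abs_of_nonneg (hu0 _), _root_.abs_of_nonneg (hu0 _)]
    have hfac : ((n+1)! : ℝ) = (n+1) * (n !) := by exact_mod_cast Nat.factorial_succ n
    have hn1' : 1 ≤ n := by exact_mod_cast hn2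
    have hpow : r ^ (n + 1 - 1) = r ^ (n - 1) * r := by
      rw [show n + 1 - 1 = n from rfl, show n = (n - 1) + 1 from (Nat.succ_pred_eq_of_pos hn1').symm]
      rw [pow_succ]
      congr 1
    have key : (‖a‖ + n) * r ≤ l * n := by
      have : (‖a‖ : ℝ) * r + n * r ≤ n * l := by nlinarith
      nlinarith
    rw [hu]
    simp only [Finset.prod_range_succ, hfac, hpow]
    push_cast
    have hC : (0:ℝ) ≤ (∏ i ∈ Finset.range n, (‖a‖ + i)) * K * r ^ (n - 1) / (n !) := by positivity
    calc (∏ i ∈ Finset.range n, (‖a‖ + i)) * (‖a‖ + n) * K * (n + 1) * (r ^ (n - 1) * r) / ((n + 1) * n !)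
        = ((∏ i ∈ Finset.range n, (‖a‖ + i)) * K * r ^ (n - 1) / (n !)) * ((‖a‖ + n) * r) := by
          field_simp
      _ ≤ ((∏ i ∈ Finset.range n, (‖a‖ + i)) * K * r ^ (n - 1) / (n !)) * (l * n) :=
          mul_le_mul_of_nonneg_left key hC
      _ = l * ((∏ i ∈ Finset.range n, (‖a‖ + i)) * K * n * r ^ (n - 1) / (n !)) := by ring
  -- term-by-term differentiation on the ball
  have hball : z ∈ Metric.ball (0:ℂ) r := by
    rw [Metric.mem_ball, dist_zero_right]; exact hzr
  have h0ball : (0:ℂ) ∈ Metric.ball (0:ℂ) r := Metric.mem_ball_self hr0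
  have hderiv : ∀ (n : ℕ), ∀ y ∈ Metric.ball (0:ℂ) r,
      HasDerivAt (fun w : ℂ => A n * w ^ n) (A n * (n * y ^ (n - 1))) y :=
    fun n y _ => (hasDerivAt_pow n y).const_mul (A n)
  have hbound : ∀ (n : ℕ), ∀ y ∈ Metric.ball (0:ℂ) r,
      ‖A n * (↑n * y ^ (n - 1))‖ ≤ u n := by
    intro n y hy
    rw [Metric.mem_ball, dist_zero_right] at hy
    have hprodnn : (0:ℝ) ≤ ∏ i ∈ Finset.range n, (‖a‖ + i) :=
      Finset.prod_nonneg fun i _ => by positivity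
    rw [norm_mul, norm_mul, Complex.norm_natCast, norm_pow]
    calc ‖A n‖ * ((n:ℝ) * ‖y‖ ^ (n - 1))
        ≤ ((∏ i ∈ Finset.range n, (‖a‖ + i)) * K / (n !)) * ((n:ℝ) * r ^ (n - 1)) := by
          refine mul_le_mul (hAle n) ?_ (by positivity) (by positivity)
          exact mul_le_mul_of_nonneg_left
            (pow_le_pow_left₀ (norm_nonneg y) hy.le _) (Nat.cast_nonneg n)
      _ = u n := by rw [hu]; ring
  have hsum0 : Summable fun n : ℕ => A n * (0:ℂ) ^ n := by
    apply summable_of_ne_finset_zero (s := ({0} : Finset ℕ))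
    intro n hn
    rw [zero_pow (by simpa using hn), mul_zero]
  have hder := hasDerivAt_tsum_of_isPreconnected husum Metric.isOpen_ball
    (convex_ball (0:ℂ) r).isPreconnected hderiv hbound h0ball hsum0 hball
  rw [hF, hder.deriv]
  have hsumz : Summable fun n : ℕ => A n * ((n : ℂ) * z ^ (n - 1)) :=
    Summable.of_norm_bounded husum (fun n => hbound n z hball)
  rw [Summable.tsum_eq_zero_add hsumz]
  simp only [Nat.cast_zero, zero_mul, mul_zero, zero_add]
  simp only [mlF]
  rw [← tsum_mul_left]
  refine tsum_congr fun n => ?_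
  have e3 : (c:ℂ) + 1 - (b + 1) = c - b := by ring
  have e4 : b + 1 + (n:ℂ) = b + ((n+1 : ℕ) : ℂ) := by push_cast; ring
  rw [e3, e4, hA]
  simp only
  rw [poch_succ_eval_left]
  have hfc : (((n+1)! : ℕ) : ℂ) = ((n:ℂ) + 1) * ((n ! : ℕ) : ℂ) := by
    rw [Nat.factorial_succ]; push_cast; ring
  rw [hfc]
  have hne1 : ((n:ℂ) + 1) ≠ 0 := Nat.cast_add_one_ne_zero n
  have hne2 : ((n ! : ℕ) : ℂ) ≠ 0 := Nat.cast_ne_zero.mpr (Nat.factorial_ne_zero n)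
  have hcast : ((n+1 : ℕ) : ℂ) = (n : ℂ) + 1 := by push_cast; ring
  rw [hcast]
  field_simp
  set Q := Polynomial.eval (a+1) (ascPochhammer ℂ n) with hQ
  set X := mlBeta α β γ (↑p) (b + ((n:ℂ) + 1)) (c - b) with hX
  set B1 := Complex.betaIntegral (b+1) (c - b) with hB1'
  simp only [Nat.add_sub_cancel]
  linear_combination (-(a * Q * X * z ^ n)) * hid
end

section
/- For p ≥ 0, Re(c) > Re(b) > 0, Re(α) > 0, and |z| < 1, the n-th derivative of the ML-generalized confluent hypergeometric function satisfies d^n/dz^n [Φ_p^{ML}(b;c;z)] = ((b)_n/(c)_n) · Φ_p^{ML}(b+n; c+n; z). -/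
open Complex MeasureTheory intervalIntegral
open scoped Real Nat

/-- ML-generalized confluent hypergeometric function, defined by its series. -/
noncomputable def mlPhi (α β γ : ℂ) (p : ℝ) (b c z : ℂ) : ℂ :=
  ∑' n : ℕ, (mlBeta α β γ p (b + n) (c - b) / Complex.betaIntegral b (c - b)) * z ^ n / (n ! : ℂ)

/-- Summability of series with coefficients bounded by `M`, divided by factorials. -/
lemma aux_summable (a : ℕ → ℂ) (M : ℝ) (hM : ∀ k, ‖a k‖ ≤ M) (x : ℂ) :
    Summable fun k : ℕ => a k * x ^ k / (k ! : ℂ) := by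
  apply Summable.of_norm_bounded (g := fun k : ℕ => M * (‖x‖ ^ k / (k ! : ℝ)))
    ((Real.summable_pow_div_factorial ‖x‖).mul_left M)
  intro k
  have h1 : ‖a k * x ^ k / (k ! : ℂ)‖ = ‖a k‖ * ‖x‖ ^ k / (k ! : ℝ) := by
    rw [norm_div, norm_mul, norm_pow, Complex.norm_natCast]
  have h2 : M * (‖x‖ ^ k / (k ! : ℝ)) = M * ‖x‖ ^ k / (k ! : ℝ) := by ring
  rw [h1, h2]
  gcongr
  exact hM k

/-- Termwise differentiation of an exponential-type power series with bounded
coefficients. -/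
lemma aux_hasDerivAt (a : ℕ → ℂ) (M : ℝ) (hM : ∀ k, ‖a k‖ ≤ M) (x : ℂ) :
    HasDerivAt (fun w : ℂ => ∑' k : ℕ, a k * w ^ k / (k ! : ℂ))
      (∑' k : ℕ, a (1 + k) * x ^ k / (k ! : ℂ)) x := by
  have hM0 : 0 ≤ M := le_trans (norm_nonneg _) (hM 0)
  set R : ℝ := ‖x‖ + 1 with hR
  have hR1 : (1:ℝ) ≤ R := by have := norm_nonneg x; linarith
  have hR0 : (0:ℝ) < R := lt_of_lt_of_le one_pos hR1
  set u : ℕ → ℝ := fun k => M * ((2 * R) ^ k / (k ! : ℝ)) with hu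
  set g' : ℕ → ℂ → ℂ := fun k y => a k * ((k : ℂ) * y ^ (k - 1)) / (k ! : ℂ) with hg'
  have hbound : ∀ (k : ℕ) (y : ℂ), y ∈ Metric.ball (0:ℂ) R → ‖g' k y‖ ≤ u k := by
    intro k y hy
    rw [Metric.mem_ball, dist_zero_right] at hy
    have hyR : ‖y‖ ≤ R := le_of_lt hy
    have hk : (0:ℝ) < (k ! : ℝ) := by positivity
    have hnorm : ‖g' k y‖ = ‖a k‖ * ((k : ℝ) * ‖y‖ ^ (k - 1)) / (k ! : ℝ) := by
      simp [hg', norm_div, norm_mul, norm_pow, Complex.norm_natCast]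
    rw [hnorm]
    have key : (k : ℝ) * ‖y‖ ^ (k - 1) ≤ (2 * R) ^ k := by
      have h1 : ‖y‖ ^ (k - 1) ≤ R ^ (k - 1) := pow_le_pow_left₀ (norm_nonneg _) hyR _
      have h2 : R ^ (k - 1) ≤ R ^ k := pow_le_pow_right₀ hR1 (Nat.sub_le k 1)
      have h3 : (k : ℝ) ≤ 2 ^ k := by
        exact_mod_cast (Nat.lt_two_pow_self (n := k)).le
      calc (k : ℝ) * ‖y‖ ^ (k - 1) ≤ 2 ^ k * R ^ k := by
            apply mul_le_mul h3 (h1.trans h2) (by positivity) (by positivity)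
        _ = (2 * R) ^ k := (mul_pow 2 R k).symm
    show ‖a k‖ * ((k:ℝ) * ‖y‖ ^ (k - 1)) / (k ! : ℝ) ≤ M * ((2 * R) ^ k / (k ! : ℝ))
    have h2 : M * ((2 * R) ^ k / (k ! : ℝ)) = M * (2 * R) ^ k / (k ! : ℝ) := by ring
    rw [h2]
    gcongr ?_ / _
    exact mul_le_mul (hM k) key (by positivity) hM0
  have husum : Summable u := (Real.summable_pow_div_factorial (2 * R)).mul_left M
  have hder : HasDerivAt (fun w : ℂ => ∑' k : ℕ, a k * w ^ k / (k ! : ℂ))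
      (∑' k : ℕ, g' k x) x := by
    apply hasDerivAt_tsum_of_isPreconnected husum Metric.isOpen_ball
      (convex_ball _ _).isPreconnected
      (g := fun k w => a k * w ^ k / (k ! : ℂ)) (y₀ := x)
      (fun k y _ => (((hasDerivAt_pow k y).const_mul (a k)).div_const _))
      hbound ?_ (aux_summable a M hM x) ?_
    · simp [Metric.mem_ball, hR]
    · simp [Metric.mem_ball, hR]
  have hsum' : Summable fun k : ℕ => g' k x := by
    apply Summable.of_norm_bounded (g := u) husum
    intro k
    exact hbound k x (by simp [Metric.mem_ball, hR])
  have htsum : (∑' k : ℕ, g' k x) = ∑' k : ℕ, a (1 + k) * x ^ k / (k ! : ℂ) := by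
    rw [Summable.tsum_eq_zero_add hsum']
    have h0 : g' 0 x = 0 := by simp [hg']
    rw [h0, zero_add]
    apply tsum_congr
    intro k
    have hk1 : ((k : ℂ) + 1) ≠ 0 := by
      have := Nat.cast_ne_zero (R := ℂ).mpr k.succ_ne_zero
      push_cast at this
      exact this
    have hkf : ((k ! : ℕ) : ℂ) ≠ 0 := by exact_mod_cast Nat.cast_ne_zero.mpr k.factorial_ne_zero
    simp only [hg', Nat.add_sub_cancel, Nat.factorial_succ, Nat.add_comm 1 k]
    push_cast
    field_simp
  rwa [htsum] at hder

/-- Iterated derivative of an exponential-type power series with bounded coefficients. -/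
lemma aux_iteratedDeriv (n : ℕ) : ∀ (a : ℕ → ℂ) (M : ℝ), (∀ k, ‖a k‖ ≤ M) → ∀ z : ℂ,
    iteratedDeriv n (fun w : ℂ => ∑' k : ℕ, a k * w ^ k / (k ! : ℂ)) z
      = ∑' k : ℕ, a (n + k) * z ^ k / (k ! : ℂ) := by
  induction n with
  | zero => intro a M hM z; simp
  | succ n ih =>
    intro a M hM z
    rw [iteratedDeriv_succ']
    have hde : (deriv fun w : ℂ => ∑' k : ℕ, a k * w ^ k / (k ! : ℂ))
        = fun w : ℂ => ∑' k : ℕ, a (1 + k) * w ^ k / (k ! : ℂ) := by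
      funext w
      exact (aux_hasDerivAt a M hM w).deriv
    rw [hde, ih (fun k => a (1 + k)) M (fun k => hM _) z]
    apply tsum_congr
    intro k
    congr 3
    omega

/-- Gamma recurrence in Pochhammer form. -/
lemma aux_gamma_poch (s : ℂ) (hs : 0 < s.re) (n : ℕ) :
    Complex.Gamma (s + n) = (ascPochhammer ℂ n).eval s * Complex.Gamma s := by
  induction n with
  | zero => simp
  | succ n ih =>
    have hne : s + n ≠ 0 := by
      intro h
      have : (s + (n:ℂ)).re = 0 := by rw [h]; simp
      simp only [Complex.add_re, Complex.natCast_re] at this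
      have : (0:ℝ) ≤ (n:ℝ) := Nat.cast_nonneg n
      linarith
    have : s + ((n:ℂ) + 1) = (s + n) + 1 := by ring
    rw [Nat.cast_add, Nat.cast_one, this, Complex.Gamma_add_one _ hne, ih,
      ascPochhammer_succ_right]
    simp only [Polynomial.eval_mul, Polynomial.eval_add, Polynomial.eval_X,
      Polynomial.eval_natCast]
    ring

lemma aux_poch_ne_zero (s : ℂ) (hs : 0 < s.re) (n : ℕ) :
    (ascPochhammer ℂ n).eval s ≠ 0 := by
  intro h
  have h1 : Complex.Gamma (s + n) ≠ 0 := by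
    apply Complex.Gamma_ne_zero_of_re_pos
    simp only [Complex.add_re, Complex.natCast_re]
    have : (0:ℝ) ≤ (n:ℝ) := Nat.cast_nonneg n
    linarith
  rw [aux_gamma_poch s hs n, h, zero_mul] at h1
  exact h1 rfl

/-- n-th differentiation formula for the ML-generalized confluent hypergeometric function. -/
theorem mlPhi_iteratedDeriv (α β γ : ℂ) (p : ℝ) (b c z : ℂ) (n : ℕ)
    (hp : 0 ≤ p) (hb : 0 < b.re) (hbc : b.re < c.re) (hα : 0 < α.re)
    (hz : ‖z‖ < 1) :
    iteratedDeriv n (fun w => mlPhi α β γ p b c w) z =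
      (ascPochhammer ℂ n).eval b / (ascPochhammer ℂ n).eval c *
        mlPhi α β γ p (b + n) (c + n) z := by
  -- the family of integrands
  set F : ℕ → ℝ → ℂ := fun j t =>
    (t : ℂ) ^ (b + j - 1) * ((1 : ℂ) - t) ^ (c - b - 1) *
      mlE α β γ (-(p:ℂ) / (t * (1 - t))) with hF
  set a : ℕ → ℂ := fun j => mlBeta α β γ p (b + j) (c - b) with ha
  have haF : ∀ j, a j = ∫ t in (0:ℝ)..1, F j t := fun j => rfl
  -- pointwise monotonicity of the norms of integrands in j
  have hpt : ∀ (i j : ℕ), i ≤ j → ∀ t ∈ Set.Ioc (0:ℝ) 1, ‖F j t‖ ≤ ‖F i t‖ := by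
    intro i j hij t ht
    obtain ⟨ht0, ht1⟩ := ht
    have h1 : ∀ m : ℕ, ‖(t : ℂ) ^ (b + m - 1)‖ = t ^ (b.re + m - 1) := by
      intro m
      rw [Complex.norm_cpow_eq_rpow_re_of_pos ht0]
      norm_num [Complex.sub_re, Complex.add_re, Complex.natCast_re]
    simp only [hF, norm_mul]
    apply mul_le_mul_of_nonneg_right _ (norm_nonneg _)
    apply mul_le_mul_of_nonneg_right _ (norm_nonneg _)
    rw [h1 i, h1 j]
    apply Real.rpow_le_rpow_of_exponent_ge ht0 ht1
    have : (i:ℝ) ≤ (j:ℝ) := Nat.cast_le.mpr hij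
    linarith
  -- a uniform bound on the coefficients
  obtain ⟨M, hM⟩ : ∃ M : ℝ, ∀ j, ‖a j‖ ≤ M := by
    by_cases hint : ∃ j, IntervalIntegrable (F j) volume 0 1
    · obtain ⟨j₀, hj₀⟩ := hint
      set I : ℝ := ∫ t in (0:ℝ)..1, ‖F j₀ t‖ with hI
      have hI0 : 0 ≤ I := intervalIntegral.integral_nonneg zero_le_one
        (fun t _ => norm_nonneg _)
      refine ⟨I + ∑ i ∈ Finset.range j₀, ‖a i‖, fun j => ?_⟩
      by_cases hjj : j₀ ≤ j
      · have : ‖a j‖ ≤ |I| := by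
          rw [haF j, hI]
          apply intervalIntegral.norm_integral_le_abs_of_norm_le _ hj₀.norm
          filter_upwards [ae_restrict_mem measurableSet_uIoc] with t ht
          rw [Set.uIoc_of_le (zero_le_one)] at ht
          exact hpt j₀ j hjj t ht
        rw [_root_.abs_of_nonneg hI0] at this
        have hsum : (0:ℝ) ≤ ∑ i ∈ Finset.range j₀, ‖a i‖ :=
          Finset.sum_nonneg fun i _ => norm_nonneg _
        linarith
      · push_neg at hjj
        have : ‖a j‖ ≤ ∑ i ∈ Finset.range j₀, ‖a i‖ :=
          Finset.single_le_sum (fun i _ => norm_nonneg (a i)) (Finset.mem_range.mpr hjj)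
        linarith
    · push_neg at hint
      refine ⟨0, fun j => ?_⟩
      rw [haF j, intervalIntegral.integral_undef (hint j), norm_zero]
  -- nonvanishing facts
  have hcb : 0 < (c - b).re := by simp [Complex.sub_re]; linarith
  have hc : 0 < c.re := lt_trans hb hbc
  have hbn : 0 < (b + (n:ℂ)).re := by
    simp only [Complex.add_re, Complex.natCast_re]
    have : (0:ℝ) ≤ (n:ℝ) := Nat.cast_nonneg n
    linarith
  have hΓb : Complex.Gamma b ≠ 0 := Complex.Gamma_ne_zero_of_re_pos hb
  have hΓcb : Complex.Gamma (c - b) ≠ 0 := Complex.Gamma_ne_zero_of_re_pos hcb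
  have hΓc : Complex.Gamma c ≠ 0 := Complex.Gamma_ne_zero_of_re_pos hc
  have hΓcn : Complex.Gamma (c + n) ≠ 0 := by
    apply Complex.Gamma_ne_zero_of_re_pos
    simp only [Complex.add_re, Complex.natCast_re]
    have : (0:ℝ) ≤ (n:ℝ) := Nat.cast_nonneg n
    linarith
  set B : ℂ := Complex.betaIntegral b (c - b) with hB
  set B' : ℂ := Complex.betaIntegral (b + n) (c - b) with hB'
  set Pb : ℂ := (ascPochhammer ℂ n).eval b with hPb
  set Pc : ℂ := (ascPochhammer ℂ n).eval c with hPc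
  have hPbne : Pb ≠ 0 := aux_poch_ne_zero b hb n
  have hPcne : Pc ≠ 0 := aux_poch_ne_zero c hc n
  have e1 : Complex.Gamma b * Complex.Gamma (c - b) = Complex.Gamma c * B := by
    have := Complex.Gamma_mul_Gamma_eq_betaIntegral hb hcb
    rwa [show b + (c - b) = c by ring] at this
  have e2 : Complex.Gamma (b + n) * Complex.Gamma (c - b) = Complex.Gamma (c + n) * B' := by
    have := Complex.Gamma_mul_Gamma_eq_betaIntegral hbn hcb
    rwa [show b + (n:ℂ) + (c - b) = c + n by ring] at this
  have e3 : Complex.Gamma (b + n) = Pb * Complex.Gamma b := aux_gamma_poch b hb n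
  have e4 : Complex.Gamma (c + n) = Pc * Complex.Gamma c := aux_gamma_poch c hc n
  have hBne : B ≠ 0 := by
    intro h
    rw [h, mul_zero] at e1
    exact mul_ne_zero hΓb hΓcb e1
  have hBne' : B' ≠ 0 := by
    intro h
    rw [h, mul_zero] at e2
    rw [e3] at e2
    exact mul_ne_zero (mul_ne_zero hPbne hΓb) hΓcb e2
  have key : Pb * B = Pc * B' := by
    rw [e3, e4] at e2
    have h5 : Complex.Gamma c * (Pb * B) = Complex.Gamma c * (Pc * B') := by
      have h6 : Pb * (Complex.Gamma b * Complex.Gamma (c - b)) = Pb * (Complex.Gamma c * B) := by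
        rw [e1]
      calc Complex.Gamma c * (Pb * B) = Pb * (Complex.Gamma c * B) := by ring
        _ = Pb * (Complex.Gamma b * Complex.Gamma (c - b)) := h6.symm
        _ = Pb * Complex.Gamma b * Complex.Gamma (c - b) := by ring
        _ = Pc * Complex.Gamma c * B' := e2
        _ = Complex.Gamma c * (Pc * B') := by ring
    exact mul_left_cancel₀ hΓc h5
  -- bound for the divided coefficients
  have hM' : ∀ k, ‖a k / B‖ ≤ M / ‖B‖ := by
    intro k
    rw [norm_div]
    gcongr
    exact hM k
  -- compute the iterated derivative
  have hLHS : iteratedDeriv n (fun w => mlPhi α β γ p b c w) z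
      = ∑' k : ℕ, (a (n + k) / B) * z ^ k / (k ! : ℂ) := by
    have : (fun w => mlPhi α β γ p b c w)
        = fun w : ℂ => ∑' k : ℕ, (a k / B) * w ^ k / (k ! : ℂ) := rfl
    rw [this]
    exact aux_iteratedDeriv n (fun k => a k / B) (M / ‖B‖) hM' z
  have hRHS : mlPhi α β γ p (b + n) (c + n) z
      = ∑' k : ℕ, (a (n + k) / B') * z ^ k / (k ! : ℂ) := by
    unfold mlPhi
    apply tsum_congr
    intro k
    have h1 : c + (n:ℂ) - (b + n) = c - b := by ring
    have h2 : b + (n:ℂ) + (k:ℂ) = b + ((n + k : ℕ) : ℂ) := by push_cast; ring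
    rw [h1, h2]
  rw [hLHS, hRHS, ← tsum_mul_left]
  apply tsum_congr
  intro k
  have : Pb / Pc * (a (n + k) / B') = a (n + k) / B := by
    rw [div_mul_div_comm, div_eq_div_iff (mul_ne_zero hPcne hBne') hBne]
    linear_combination a (n + k) * key
  rw [← this]
  ring
end

section
/- Let p > 0, Re(c) > Re(b) > 0, Re(α) > 0, and z ∈ ℂ. The ML-generalized confluent hypergeometric function satisfies the Kummer-type transformation Φ_p^{ML}(b;c;z) = e^z · Φ_p^{ML}(c−b; c; −z). -/
open Complex MeasureTheory intervalIntegral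
open scoped Real Nat

/-- ML-generalized confluent hypergeometric function, defined by its integral. -/
noncomputable def mlPhiInt (α β γ : ℂ) (p : ℝ) (b c z : ℂ) : ℂ :=
  (Complex.betaIntegral b (c - b))⁻¹ *
    ∫ t in (0:ℝ)..1, (t : ℂ) ^ (b - 1) * ((1 : ℂ) - t) ^ (c - b - 1) *
      Complex.exp (z * t) * mlE α β γ (-(p : ℂ) / (t * (1 - t)))

/-- Kummer-type transformation for the ML-generalized confluent hypergeometric function. -/
theorem mlPhi_kummer (α β γ : ℂ) (p : ℝ) (b c z : ℂ)
    (hp : 0 < p) (hb : 0 < b.re) (hbc : b.re < c.re) (hα : 0 < α.re) :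
    mlPhiInt α β γ p b c z = Complex.exp z * mlPhiInt α β γ p (c - b) c (-z) := by
  unfold mlPhiInt
  have hsub : (∫ t in (0:ℝ)..1, (t : ℂ) ^ (b - 1) * ((1 : ℂ) - t) ^ (c - b - 1) *
      Complex.exp (z * t) * mlE α β γ (-(p : ℂ) / (t * (1 - t))))
      = ∫ t in (0:ℝ)..1, ((1 : ℂ) - t) ^ (b - 1) * (t : ℂ) ^ (c - b - 1) *
        Complex.exp (z * (1 - t)) * mlE α β γ (-(p : ℂ) / ((1 - t) * (1 - (1 - t)))) := by
    have := intervalIntegral.integral_comp_sub_left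
      (fun s : ℝ => ((s : ℂ)) ^ (b - 1) * ((1 : ℂ) - s) ^ (c - b - 1) *
        Complex.exp (z * s) * mlE α β γ (-(p : ℂ) / (s * (1 - s)))) (a := 0) (b := 1) 1
    simp only [sub_zero, sub_self] at this
    rw [← this]
    apply intervalIntegral.integral_congr
    intro t _
    push_cast
    ring_nf
  rw [hsub, Complex.betaIntegral_symm]
  rw [show c - (c - b) = b by ring, mul_left_comm]
  congr 1
  rw [← intervalIntegral.integral_const_mul]
  apply intervalIntegral.integral_congr
  intro t _
  simp only []
  rw [show (1:ℂ) - (1 - (t:ℂ)) = t by ring, show z * (1 - (t:ℂ)) = z + -z * t by ring,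
    Complex.exp_add]
  ring
end

section
/- Let p > 0, Re(c−a−b) > 0, Re(b) > 0, Re(α) > 0. Then the ML-generalized Gauss hypergeometric function at z = 1 satisfies the Gauss-type summation formula F_p^{ML}(a,b;c;1) = B_p^{ML}(b, c−a−b) / B(b, c−b). -/
open Complex MeasureTheory intervalIntegral
open scoped Real Nat

/-- ML-generalized Gauss hypergeometric function, defined by its Euler integral. -/
noncomputable def mlFInt (α β γ : ℂ) (p : ℝ) (a b c z : ℂ) : ℂ :=
  (Complex.betaIntegral b (c - b))⁻¹ *
    ∫ t in (0:ℝ)..1, (t : ℂ) ^ (b - 1) * ((1 : ℂ) - t) ^ (c - b - 1) *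
      ((1 : ℂ) - z * t) ^ (-a) * mlE α β γ (-(p : ℂ) / (t * (1 - t)))

/-- Gauss-type summation formula at z = 1. -/
theorem mlF_at_one (α β γ : ℂ) (p : ℝ) (a b c : ℂ)
    (hp : 0 < p) (hcab : 0 < (c - a - b).re) (hb : 0 < b.re) (hα : 0 < α.re) :
    mlFInt α β γ p a b c 1 =
      mlBeta α β γ p b (c - a - b) / Complex.betaIntegral b (c - b) := by
  unfold mlFInt mlBeta
  rw [div_eq_inv_mul]
  congr 1
  apply intervalIntegral.integral_congr_ae
  have h1 : ∀ᵐ t : ℝ ∂volume, t ≠ 1 := by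
    rw [MeasureTheory.ae_iff]
    simpa using Real.volume_singleton (a := 1)
  filter_upwards [h1] with t ht _
  have h1t : ((1 : ℂ) - (t : ℂ)) ≠ 0 := by
    intro h
    apply ht
    have : ((t : ℂ)) = 1 := by linear_combination -h
    exact_mod_cast this
  rw [one_mul, mul_assoc ((t:ℂ) ^ (b-1)), ← Complex.cpow_add _ _ h1t]
  ring_nf
end
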